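/- If φ is a homogeneous quasimorphism on a group G with defect D(φ), then for every g ∈ [G,G], scl(g) ≥ φ(g)/(2 D(φ)). In particular, if D(φ) = 1 then scl(g) ≥ φ(g)/2. -/

import Mathlib

open scoped commutatorElement

/-- Commutator length. -/
noncomputable def cl {G : Type*} [Group G] (g : G) : ℕ :=
  sInf {k : ℕ | ∃ f h : Fin k → G, g = (List.ofFn (fun i => ⁅f i, h i⁆)).prod}

/-- Stable commutator length, `scl g = lim cl(gⁿ)/n` (encoded as a limsup; the
limit exists by Fekete's lemma for `g ∈ [G,G]`). -/
noncomputable def scl {G : Type*} [Group G] (g : G) : ℝ :=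
  Filter.atTop.limsup (fun n : ℕ => (cl (g ^ n) : ℝ) / n)

/-- The defect of a quasimorphism. -/
noncomputable def defect {G : Type*} [Group G] (φ : G → ℝ) : ℝ :=
  sSup {x : ℝ | ∃ a b : G, x = |φ (a * b) - φ a - φ b|}

/-!
A homogeneous quasimorphism is constant on conjugacy classes: the error `φ (a b a⁻¹) - φ b` is
bounded by `2 D` but scales linearly when `b` is replaced by `bⁿ`. Hence
`φ ⁅a, b⁆ = φ (a b a⁻¹) + φ b⁻¹ + O(D) ≤ D`, and a product of `k` commutators has
`φ ≤ 2 k D`. Applied to `gⁿ`, written with `cl (gⁿ)` commutators, this gives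
`n φ g ≤ 2 cl (gⁿ) D`; divide by `2 n D` and pass to the limsup.
-/

open Filter

lemma nonpos_of_forall_nat_mul_le {x C : ℝ} (h : ∀ n : ℕ, n * x ≤ C) : x ≤ 0 := by
  by_contra! hx
  obtain ⟨n, hn⟩ := exists_nat_gt (C / x)
  rw [div_lt_iff₀ hx] at hn
  linarith [h n]

section CommutatorLength

variable {G : Type*} [Group G]

lemma exists_list_of_mem_commutator {g : G} (hg : g ∈ commutator G) :
    ∃ l : List G, (∀ x ∈ l, x ∈ commutatorSet G) ∧ l.prod = g := by
  rw [commutator_eq_closure, ← Subgroup.mem_toSubmonoid, Subgroup.closure_toSubmonoid] at hg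
  obtain ⟨l, hl, rfl⟩ := Submonoid.exists_list_of_mem_closure hg
  refine ⟨l, fun x hx => ?_, rfl⟩
  rcases hl x hx with hx | ⟨a, b, hab⟩
  · exact hx
  · exact ⟨b, a, by rw [← commutatorElement_inv, hab, inv_inv]⟩

lemma exists_ofFn_commutatorElement_iff {k : ℕ} {g : G} :
    (∃ f h : Fin k → G, g = (List.ofFn fun i => ⁅f i, h i⁆).prod) ↔
      ∃ l : List G, (∀ x ∈ l, x ∈ commutatorSet G) ∧ l.length = k ∧ l.prod = g := by
  constructor
  · rintro ⟨f, h, rfl⟩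
    exact ⟨_, by simp [commutator_mem_commutatorSet], List.length_ofFn, rfl⟩
  · rintro ⟨l, hl, rfl, rfl⟩
    choose f h hfh using fun i : Fin l.length => hl _ (List.get_mem l i)
    exact ⟨f, h, by simp only [hfh, List.ofFn_get]⟩

lemma cl_prod_le_length {l : List G} (hl : ∀ x ∈ l, x ∈ commutatorSet G) :
    cl l.prod ≤ l.length :=
  Nat.sInf_le (exists_ofFn_commutatorElement_iff.2 ⟨l, hl, rfl, rfl⟩)

lemma exists_list_length_eq_cl {g : G} (hg : g ∈ commutator G) :
    ∃ l : List G, (∀ x ∈ l, x ∈ commutatorSet G) ∧ l.length = cl g ∧ l.prod = g := by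
  obtain ⟨l, hl, rfl⟩ := exists_list_of_mem_commutator hg
  have hne : {k | ∃ f h : Fin k → G, l.prod = (List.ofFn fun i => ⁅f i, h i⁆).prod}.Nonempty :=
    ⟨_, exists_ofFn_commutatorElement_iff.2 ⟨l, hl, rfl, rfl⟩⟩
  exact exists_ofFn_commutatorElement_iff.1 (Nat.sInf_mem hne)

lemma cl_mul_le {g h : G} (hg : g ∈ commutator G) (hh : h ∈ commutator G) :
    cl (g * h) ≤ cl g + cl h := by
  obtain ⟨l₁, hl₁, hlen₁, rfl⟩ := exists_list_length_eq_cl hg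
  obtain ⟨l₂, hl₂, hlen₂, rfl⟩ := exists_list_length_eq_cl hh
  rw [← List.prod_append, ← hlen₁, ← hlen₂, ← List.length_append]
  exact cl_prod_le_length (List.forall_mem_append.2 ⟨hl₁, hl₂⟩)

lemma cl_pow_le {g : G} (hg : g ∈ commutator G) (n : ℕ) : cl (g ^ n) ≤ n * cl g := by
  induction n with
  | zero => simpa using cl_prod_le_length (l := ([] : List G)) (by simp)
  | succ n ih =>
    calc cl (g ^ (n + 1)) ≤ cl (g ^ n) + cl g := pow_succ g n ▸ cl_mul_le (pow_mem hg n) hg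
      _ ≤ (n + 1) * cl g := by rw [add_mul, one_mul]; gcongr

lemma le_scl {g : G} (hg : g ∈ commutator G) {c : ℝ} (hc : ∀ n : ℕ, c * n ≤ cl (g ^ n)) :
    c ≤ scl g := by
  -- `limsup` in `ℝ` is a junk value unless the sequence is bounded above; this needs `hg`
  have hbdd : IsBoundedUnder (· ≤ ·) atTop fun n : ℕ => (cl (g ^ n) : ℝ) / n := by
    refine isBoundedUnder_of ⟨cl g, fun n => div_le_of_le_mul₀ n.cast_nonneg
      (Nat.cast_nonneg _) ?_⟩
    rw [mul_comm]
    exact_mod_cast cl_pow_le hg n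
  refine le_limsup_of_frequently_le (Eventually.frequently ?_) hbdd
  filter_upwards [eventually_gt_atTop 0] with n hn
  rw [le_div_iff₀ (by exact_mod_cast hn)]
  exact hc n

end CommutatorLength

section Quasimorphism

variable {G : Type*} [Group G] {φ : G → ℝ} {D : ℝ}

lemma map_list_prod_le (hD : ∀ a b : G, |φ (a * b) - φ a - φ b| ≤ D) (h1 : φ 1 = 0)
    {C : ℝ} {l : List G} (hl : ∀ x ∈ l, φ x ≤ C) : φ l.prod ≤ l.length * (C + D) := by
  induction l with
  | nil => simp [h1]
  | cons x l ih =>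
    rw [List.forall_mem_cons] at hl
    have := (abs_le.1 (hD x l.prod)).2
    rw [List.prod_cons, List.length_cons]
    push_cast
    linarith [ih hl.2, hl.1]

lemma abs_map_conj_sub_le (hD : ∀ a b : G, |φ (a * b) - φ a - φ b| ≤ D) {a : G}
    (hinv : φ a⁻¹ = -φ a) (b : G) : |φ (a * b * a⁻¹) - φ b| ≤ 2 * D :=
  calc |φ (a * b * a⁻¹) - φ b|
      = |(φ (a * (b * a⁻¹)) - φ a - φ (b * a⁻¹)) + (φ (b * a⁻¹) - φ b - φ a⁻¹)| := by
        rw [mul_assoc, hinv]; ring_nf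
    _ ≤ D + D := (abs_add_le _ _).trans (add_le_add (hD _ _) (hD _ _))
    _ = 2 * D := by ring

def IsPowHomogeneous (φ : G → ℝ) : Prop :=
  ∀ (g : G) (n : ℤ), φ (g ^ n) = n * φ g

lemma IsPowHomogeneous.map_one (hhom : IsPowHomogeneous φ) : φ 1 = 0 := by
  simpa using hhom 1 0

lemma IsPowHomogeneous.map_inv (hhom : IsPowHomogeneous φ) (a : G) : φ a⁻¹ = -φ a := by
  simpa using hhom a (-1)

lemma IsPowHomogeneous.map_pow (hhom : IsPowHomogeneous φ) (a : G) (n : ℕ) :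
    φ (a ^ n) = n * φ a := by
  simpa using hhom a n

lemma IsPowHomogeneous.map_conj (hhom : IsPowHomogeneous φ)
    (hD : ∀ a b : G, |φ (a * b) - φ a - φ b| ≤ D) (a b : G) :
    φ (a * b * a⁻¹) = φ b := by
  have hbound (n : ℕ) : n * |φ (a * b * a⁻¹) - φ b| ≤ 2 * D := by
    have := abs_map_conj_sub_le hD (hhom.map_inv a) (b ^ n)
    rwa [← conj_pow, hhom.map_pow, hhom.map_pow, ← mul_sub, abs_mul, Nat.abs_cast] at this
  exact sub_eq_zero.1 (abs_nonpos_iff.1 (nonpos_of_forall_nat_mul_le hbound))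

lemma IsPowHomogeneous.map_commutatorElement_le (hhom : IsPowHomogeneous φ)
    (hD : ∀ a b : G, |φ (a * b) - φ a - φ b| ≤ D) (a b : G) :
    φ ⁅a, b⁆ ≤ D := by
  have := (abs_le.1 (hD (a * b * a⁻¹) b⁻¹)).2
  rw [hhom.map_conj hD, hhom.map_inv] at this
  rw [commutatorElement_def]
  linarith

lemma IsPowHomogeneous.map_le_two_mul_cl_mul (hhom : IsPowHomogeneous φ)
    (hD : ∀ a b : G, |φ (a * b) - φ a - φ b| ≤ D) {g : G} (hg : g ∈ commutator G) :
    φ g ≤ 2 * cl g * D := by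
  obtain ⟨l, hl, hlen, rfl⟩ := exists_list_length_eq_cl hg
  have hcomm : ∀ x ∈ l, φ x ≤ D := fun x hx => by
    obtain ⟨a, b, rfl⟩ := hl x hx
    exact hhom.map_commutatorElement_le hD a b
  calc φ l.prod ≤ l.length * (D + D) := map_list_prod_le hD hhom.map_one hcomm
    _ = 2 * cl l.prod * D := by rw [hlen]; ring

end Quasimorphism

/-- Easy direction of Bavard duality: for a homogeneous quasimorphism `φ` and
`g ∈ [G,G]`, `scl g ≥ φ g / (2 D(φ))`. -/
theorem bavard_easy_direction {G : Type*} [Group G] (φ : G → ℝ)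
    (hqm : BddAbove {x : ℝ | ∃ a b : G, x = |φ (a * b) - φ a - φ b|})
    (hhom : ∀ (g : G) (n : ℤ), φ (g ^ n) = (n : ℝ) * φ g)
    (g : G) (hg : g ∈ commutator G) :
    φ g / (2 * defect φ) ≤ scl g := by
  have hD (a b : G) : |φ (a * b) - φ a - φ b| ≤ defect φ := le_csSup hqm ⟨a, b, rfl⟩
  refine le_scl hg fun n => ?_
  have hpow : n * φ g ≤ 2 * cl (g ^ n) * defect φ := by
    rw [← IsPowHomogeneous.map_pow hhom]
    exact IsPowHomogeneous.map_le_two_mul_cl_mul hhom hD (pow_mem hg n)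
  rcases ((abs_nonneg _).trans (hD 1 1)).eq_or_lt with hzero | hpos
  · simp [← hzero]
  · rw [div_mul_eq_mul_div, div_le_iff₀ (by positivity)]
    linarith
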